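/- arXiv:1210.4465 — 8 statements merged into one kernel-verified Lean document; each statement's English description precedes it below -/
import Mathlib

section
/- Let f : ℂ → ℂ be a non-constant entire function, and let g be holomorphic on a punctured disk {z : 0 < |z − z₀| ≤ r} such that g does not extend to a function holomorphic on the full disk {z : |z − z₀| ≤ r} (i.e., z₀ is a non-removable isolated singularity of g). Then the composition f ∘ g, which is holomorphic on the punctured disk, also does not extend to a function holomorphic on the full disk. (Proposition 3.4, part 1.) -/
open Metric Set Filter Function Topology

/-- A non-constant entire function is unbounded in norm. -/
lemma exists_norm_gt_of_nonconst (f : ℂ → ℂ) (hf : Differentiable ℂ f)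
    (hfc : ¬ ∃ c : ℂ, ∀ z : ℂ, f z = c) (C : ℝ) : ∃ w : ℂ, C < ‖f w‖ := by
  by_contra h
  push_neg at h
  exact hfc <| hf.exists_const_forall_eq_of_bounded <|
    isBounded_iff_forall_norm_le.2 ⟨C, by rintro x ⟨u, rfl⟩; exact h u⟩

/-- Proposition 3.4, part 1: if `f` is a non-constant entire function and `g` is holomorphic
on the punctured closed disk `{z : 0 < |z - z₀| ≤ r}` with a non-removable singularity at
`z₀` (i.e. it does not extend holomorphically to the full closed disk), then `f ∘ g` also
does not extend holomorphically to the full closed disk. -/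
theorem comp_nonremovable_singularity (f : ℂ → ℂ) (hf : Differentiable ℂ f)
    (hfc : ¬ ∃ c : ℂ, ∀ z : ℂ, f z = c)
    (z₀ : ℂ) (r : ℝ) (hr : 0 < r) (g : ℂ → ℂ)
    (hg : DifferentiableOn ℂ g (Metric.closedBall z₀ r \ {z₀}))
    (hne : ¬ ∃ G : ℂ → ℂ, DifferentiableOn ℂ G (Metric.closedBall z₀ r) ∧
      ∀ z ∈ Metric.closedBall z₀ r \ {z₀}, G z = g z) :
    ¬ ∃ G : ℂ → ℂ, DifferentiableOn ℂ G (Metric.closedBall z₀ r) ∧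
      ∀ z ∈ Metric.closedBall z₀ r \ {z₀}, G z = f (g z) := by
  rintro ⟨F, hFd, hFg⟩
  -- `F` is bounded on the compact closed ball, so `f ∘ g` is bounded by `C` there
  obtain ⟨C, hC⟩ := (isCompact_closedBall z₀ r).exists_bound_of_continuousOn hFd.continuousOn
  have hfgC : ∀ z ∈ Metric.closedBall z₀ r \ {z₀}, ‖f (g z)‖ ≤ C := fun z hz => by
    rw [← hFg z hz]; exact hC z hz.1
  -- find `w` with `‖f w‖ > C` and a ball around it where `‖f‖ > C`
  obtain ⟨w, hw⟩ := exists_norm_gt_of_nonconst f hf hfc C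
  have hUopen : IsOpen {u : ℂ | C < ‖f u‖} :=
    isOpen_lt continuous_const (hf.continuous.norm)
  obtain ⟨ε, hε, hball⟩ := Metric.isOpen_iff.1 hUopen w hw
  -- hence `g` avoids `ball w ε` on the punctured disk
  have hav : ∀ z ∈ Metric.closedBall z₀ r \ {z₀}, ε ≤ ‖g z - w‖ := by
    intro z hz
    by_contra h
    push_neg at h
    have : g z ∈ Metric.ball w ε := by rwa [Metric.mem_ball, dist_eq_norm]
    exact absurd (hfgC z hz) (not_le.2 (hball this))
  have hsub : ∀ z ∈ Metric.closedBall z₀ r \ {z₀}, g z - w ≠ 0 := fun z hz => by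
    intro h0
    have := hav z hz
    rw [h0, norm_zero] at this
    exact absurd this (not_le.2 hε)
  -- the function `h = (g - w)⁻¹` is holomorphic and bounded on the punctured disk
  set h : ℂ → ℂ := fun z => (g z - w)⁻¹ with hh
  have hdh : DifferentiableOn ℂ h (Metric.closedBall z₀ r \ {z₀}) :=
    (hg.sub_const w).inv hsub
  have hnb : Metric.closedBall z₀ r ∈ 𝓝 z₀ := Metric.closedBall_mem_nhds z₀ hr
  have hbdd : BddAbove (norm ∘ h '' (Metric.closedBall z₀ r \ {z₀})) := by
    refine ⟨ε⁻¹, ?_⟩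
    rintro _ ⟨z, hz, rfl⟩
    simp only [comp_apply, hh, norm_inv]
    exact inv_anti₀ hε (hav z hz)
  -- removable singularity: `h` extends to `H` on the full closed ball
  set H : ℂ → ℂ := update h z₀ (limUnder (𝓝[≠] z₀) h) with hH
  have hHd : DifferentiableOn ℂ H (Metric.closedBall z₀ r) :=
    Complex.differentiableOn_update_limUnder_of_bddAbove hnb hdh hbdd
  have hHeq : ∀ z ∈ Metric.closedBall z₀ r \ {z₀}, H z = h z := fun z hz =>
    update_of_ne hz.2 _ _
  have hHne : ∀ z ∈ Metric.closedBall z₀ r \ {z₀}, H z ≠ 0 := fun z hz => by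
    rw [hHeq z hz]; exact inv_ne_zero (hsub z hz)
  by_cases h0 : H z₀ = 0
  · -- pole case: use the open mapping theorem to show `f` is bounded, contradiction
    have hHa : AnalyticAt ℂ H z₀ := hHd.analyticAt hnb
    rcases hHa.eventually_constant_or_nhds_le_map_nhds with hconst | hmap
    · -- `H` can't be eventually zero since it's nonzero on the punctured disk
      have h1 : ∀ᶠ z in 𝓝[≠] z₀, H z = H z₀ := hconst.filter_mono nhdsWithin_le_nhds
      have h2 : ∀ᶠ z in 𝓝[≠] z₀, z ∈ Metric.closedBall z₀ r :=
        eventually_nhdsWithin_of_eventually_nhds (eventually_of_mem hnb fun z hz => hz)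
      have h3 : ∀ᶠ z in 𝓝[≠] z₀, z ≠ z₀ := eventually_mem_nhdsWithin
      obtain ⟨z, hz1, hz2, hz3⟩ := (h1.and (h2.and h3)).exists
      exact hHne z ⟨hz2, hz3⟩ (hz1.trans h0)
    · rw [h0] at hmap
      have himg : H '' Metric.ball z₀ r ∈ 𝓝 (0 : ℂ) :=
      hmap (image_mem_map (Metric.ball_mem_nhds z₀ hr))
      obtain ⟨δ, hδ, hδsub⟩ := Metric.mem_nhds_iff.1 himg
      -- every `u` far from `w` is a value of `g`, hence `‖f u‖ ≤ C`
      have hfar : ∀ u : ℂ, δ⁻¹ < ‖u - w‖ → ‖f u‖ ≤ C := by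
        intro u hu
        have huw : u - w ≠ 0 := by
          intro h'; rw [h', norm_zero] at hu
          exact absurd hu (not_lt.2 (inv_nonneg.2 hδ.le))
        have hv : (u - w)⁻¹ ∈ Metric.ball (0 : ℂ) δ := by
          rw [Metric.mem_ball, dist_zero_right, norm_inv]
          exact inv_lt_of_inv_lt₀ hδ hu
        obtain ⟨z, hz, hHz⟩ := hδsub hv
        have hvne : (u - w)⁻¹ ≠ 0 := inv_ne_zero huw
        have hzz₀ : z ≠ z₀ := by
          intro h'; rw [h', h0] at hHz; exact hvne hHz.symm
        have hzmem : z ∈ Metric.closedBall z₀ r \ {z₀} :=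
          ⟨Metric.ball_subset_closedBall hz, hzz₀⟩
        have : (g z - w)⁻¹ = (u - w)⁻¹ := (hHeq z hzmem).symm.trans hHz
        have : g z = u := by
          have := inv_injective this
          linear_combination this
        rw [← this]
        exact hfgC z hzmem
      -- so `f` is bounded, contradicting non-constancy
      obtain ⟨C₂, hC₂⟩ := (isCompact_closedBall w δ⁻¹).exists_bound_of_continuousOn
        hf.continuous.continuousOn
      obtain ⟨u, hu⟩ := exists_norm_gt_of_nonconst f hf hfc (max C C₂)
      by_cases hmem : u ∈ Metric.closedBall w δ⁻¹
      · exact absurd (hC₂ u hmem) (not_le.2 (lt_of_le_of_lt (le_max_right _ _) hu))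
      · have : δ⁻¹ < ‖u - w‖ := by
          rw [← dist_eq_norm]
          exact lt_of_not_ge fun h' => hmem (Metric.mem_closedBall.2 h')
        exact absurd (hfar u this) (not_le.2 (lt_of_le_of_lt (le_max_left _ _) hu))
  · -- removable case: `g = w + H⁻¹` extends, contradicting `hne`
    refine hne ⟨fun z => w + (H z)⁻¹, ?_, ?_⟩
    · refine (differentiableOn_const w).add (hHd.inv ?_)
      intro z hz
      by_cases hz0 : z = z₀
      · rwa [hz0]
      · exact hHne z ⟨hz, hz0⟩
    · intro z hz
      show w + (H z)⁻¹ = g z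
      rw [hHeq z hz]
      show w + ((g z - w)⁻¹)⁻¹ = g z
      rw [inv_inv]
      ring
end

section
/- Let f, g ∈ elh(ℂ) and let γ : [0,∞) → ℂ be a finite asymptotic tract of f ∘ g (i.e., γ is continuous, |γ(t)| → ∞, and lim_{t→∞} f(g(γ(t))) exists in ℂ). Then either γ is a finite asymptotic tract of g (i.e., lim_{t→∞} g(γ(t)) exists in ℂ), or lim_{t→∞} |g(γ(t))| = ∞. (Proposition 3.6.) -/
open Filter Topology

/-- `elh ℂ`: entire functions with nonvanishing derivative, normalized so `f'(0) = 1`. -/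
def elh (f : ℂ → ℂ) : Prop :=
  Differentiable ℂ f ∧ (∀ z : ℂ, deriv f z ≠ 0) ∧ deriv f 0 = 1

/-- Proposition 3.6: if `γ` is a finite asymptotic tract of `f ∘ g`, then either `γ` is a
finite asymptotic tract of `g`, or `|g (γ(t))| → ∞`. -/
theorem tract_of_comp_dichotomy (f g : ℂ → ℂ) (hf : elh f) (hg : elh g)
    (γ : ℝ → ℂ) (hγc : ContinuousOn γ (Set.Ici 0))
    (hγtop : Tendsto (fun t => ‖γ t‖) atTop atTop)
    (hfg : ∃ a : ℂ, Tendsto (fun t => f (g (γ t))) atTop (𝓝 a)) :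
    (∃ b : ℂ, Tendsto (fun t => g (γ t)) atTop (𝓝 b)) ∨
    Tendsto (fun t => ‖g (γ t)‖) atTop atTop := by
  obtain ⟨a, hfa⟩ := hfg
  set h : ℝ → ℂ := fun t => g (γ t) with hh
  have hhc : ContinuousOn h (Set.Ici 0) := hg.1.continuous.comp_continuousOn hγc
  by_cases H : Tendsto (fun t => ‖h t‖) atTop atTop
  · exact Or.inr H
  left
  -- a bound violated frequently
  obtain ⟨R, hR⟩ : ∃ R : ℝ, ∃ᶠ t in atTop, ‖h t‖ < R := by
    rw [tendsto_atTop] at H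
    push_neg at H
    obtain ⟨R, hR⟩ := H
    exact ⟨R, hR⟩
  -- cluster point of h in the closed ball
  have hfreq : ∃ᶠ t in atTop, h t ∈ Metric.closedBall (0 : ℂ) R := by
    refine hR.mono fun t ht => ?_
    simp only [Metric.mem_closedBall, Complex.dist_eq, sub_zero]
    exact ht.le
  have hNB : (atTop ⊓ 𝓟 (h ⁻¹' Metric.closedBall (0 : ℂ) R)).NeBot :=
    frequently_iff_neBot.mp hfreq
  have hmapNB : ((atTop ⊓ 𝓟 (h ⁻¹' Metric.closedBall (0 : ℂ) R)).map h).NeBot :=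
    hNB.map h
  obtain ⟨w, hwball, hwc⟩ :=
    (ProperSpace.isCompact_closedBall (0 : ℂ) R).exists_clusterPt
      (f := (atTop ⊓ 𝓟 (h ⁻¹' Metric.closedBall (0 : ℂ) R)).map h)
      (by
        rw [Filter.map_le_iff_le_comap, Filter.comap_principal]
        exact inf_le_right)
  have hwcl : MapClusterPt w atTop h :=
    hwc.mono (Filter.map_mono inf_le_left)
  -- f w = a
  have hfw : f w = a := by
    have h1 : ClusterPt (f w) (𝓝 a) :=
      ClusterPt.map hwcl (hf.1.continuous.continuousAt)
        (by rwa [Filter.tendsto_map'_iff])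
    have := h1.neBot
    exact eq_of_nhds_neBot (by rwa [inf_comm] at this)
  -- isolated fiber point
  obtain ⟨r, hr0, hrne⟩ : ∃ r > 0, ∀ z : ℂ, dist z w < r → z ≠ w → f z ≠ a := by
    have hA : AnalyticAt ℂ f w := hf.1.analyticAt w
    rcases hA.eventually_eq_or_eventually_ne (analyticAt_const (v := a)) with heq | hne
    · exfalso
      have : deriv f w = 0 := by
        have := Filter.EventuallyEq.deriv_eq heq
        simpa using this
      exact hf.2.1 w this
    · rw [eventually_nhdsWithin_iff] at hne
      rw [Metric.eventually_nhds_iff] at hne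
      obtain ⟨ε, hε, hne⟩ := hne
      exact ⟨ε, hε, fun z hz hzw => hne hz (by simpa using hzw)⟩
  -- h tends to w
  refine ⟨w, Metric.tendsto_nhds.2 fun ε hε => ?_⟩
  set ε' : ℝ := min ε r / 2 with hε'
  have hε'0 : 0 < ε' := by positivity
  have hε'ε : ε' < ε := by
    have : min ε r ≤ ε := min_le_left _ _
    linarith
  have hε'r : ε' < r := by
    have : min ε r ≤ r := min_le_right _ _
    linarith
  suffices hev : ∀ᶠ t in atTop, dist (h t) w < ε' by
    exact hev.mono fun t ht => lt_trans ht hε'ε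
  by_contra hcon
  have hfar : ∃ᶠ t in atTop, ε' ≤ dist (h t) w := by
    rw [Filter.not_eventually] at hcon
    exact hcon.mono fun t ht => not_lt.1 ht
  have hnear : ∃ᶠ t in atTop, dist (h t) w < ε' := by
    have := (mapClusterPt_iff_frequently.1 hwcl) (Metric.ball w ε') (Metric.ball_mem_nhds w hε'0)
    exact this.mono fun t ht => by simpa [Metric.mem_ball] using ht
  -- crossing times
  have hcross : ∀ n : ℕ, ∃ t : ℝ, (n : ℝ) ≤ t ∧ dist (h t) w = ε' := by
    intro n
    set N : ℝ := max (n : ℝ) 0 with hN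
    obtain ⟨s, hsN, hs⟩ := (hnear.and_eventually (eventually_ge_atTop N)).exists
    obtain ⟨u, huN, hu⟩ := (hfar.and_eventually (eventually_ge_atTop N)).exists
    have h0s : (0:ℝ) ≤ s := le_trans (le_max_right _ _) hs
    have h0u : (0:ℝ) ≤ u := le_trans (le_max_right _ _) hu
    have hsub : Set.uIcc s u ⊆ Set.Ici (0 : ℝ) := fun x hx => by
      rcases Set.mem_uIcc.1 hx with ⟨h1, _⟩ | ⟨h1, _⟩
      · exact le_trans h0s h1
      · exact le_trans h0u h1
    have hd : ContinuousOn (fun t => dist (h t) w) (Set.uIcc s u) :=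
      (continuous_id.dist continuous_const).comp_continuousOn (hhc.mono hsub)
    have hmem : ε' ∈ Set.uIcc (dist (h s) w) (dist (h u) w) :=
      Set.mem_uIcc.2 (Or.inl ⟨hsN.le, huN⟩)
    obtain ⟨t, htm, htd⟩ := intermediate_value_uIcc hd hmem
    refine ⟨t, ?_, htd⟩
    rcases Set.mem_uIcc.1 htm with ⟨h1, _⟩ | ⟨h1, _⟩
    · exact le_trans (le_trans (le_max_left _ _) hs) h1
    · exact le_trans (le_trans (le_max_left _ _) hu) h1
  choose t ht hdt using hcross
  have httop : Tendsto t atTop atTop :=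
    tendsto_atTop_mono ht tendsto_natCast_atTop_atTop
  have hsph : ∀ n, h (t n) ∈ Metric.sphere w ε' := fun n => by
    exact Metric.mem_sphere.2 (hdt n)
  obtain ⟨w', hw'sph, φ, hφ, hφt⟩ :=
    (isCompact_sphere w ε').tendsto_subseq hsph
  have hφtop : Tendsto (fun n => t (φ n)) atTop atTop :=
    httop.comp hφ.tendsto_atTop
  have hfw' : f w' = a := by
    have h1 : Tendsto (fun n => f (h (t (φ n)))) atTop (𝓝 (f w')) :=
      (hf.1.continuous.continuousAt.tendsto).comp hφt
    have h2 : Tendsto (fun n => f (h (t (φ n)))) atTop (𝓝 a) := hfa.comp hφtop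
    exact tendsto_nhds_unique h1 h2
  have hdw' : dist w' w = ε' := Metric.mem_sphere.1 hw'sph
  exact hrne w' (by rw [hdw']; exact hε'r) (fun hww => by
    rw [hww] at hdw'; simp at hdw'; exact hε'0.ne' hdw'.symm) hfw'
end

section
/- Let f ∈ elh(ℂ). If there exists g ∈ elh(ℂ) such that every finite asymptotic tract of f ∘ g is a finite asymptotic tract of g (i.e., T_f(g) = T_f(f ∘ g)), then f is surjective: f(ℂ) = ℂ. (Proposition 3.10.) -/
open Filter Topology

/-- A finite asymptotic tract of `g`: a continuous curve `γ : [0,∞) → ℂ` with `|γ(t)| → ∞`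
such that `g (γ(t))` tends to a finite complex number as `t → ∞`. -/
def IsFiniteTract (g : ℂ → ℂ) (γ : ℝ → ℂ) : Prop :=
  ContinuousOn γ (Set.Ici 0) ∧
  Tendsto (fun t => ‖γ t‖) atTop atTop ∧
  ∃ a : ℂ, Tendsto (fun t => g (γ t)) atTop (𝓝 a)

open Set Metric Bornology

/-- A nonconstant entire function has points of arbitrarily large norm values. -/
lemma exists_norm_gt_aux {φ : ℂ → ℂ} (hd : Differentiable ℂ φ)
    (hnc : ¬ ∀ z, φ z = φ 0) (C : ℝ) : ∃ z, C < ‖φ z‖ := by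
  by_contra hb
  push_neg at hb
  exact hnc fun z => hd.apply_eq_apply_of_bounded
    (isBounded_iff_forall_norm_le.mpr ⟨C, by rintro x ⟨z, rfl⟩; exact hb z⟩) z 0

/-- A nonconstant nonvanishing entire function takes values of norm `< n`. -/
lemma exists_norm_lt_aux {φ : ℂ → ℂ} (hd : Differentiable ℂ φ) (h0 : ∀ z, φ z ≠ 0)
    (hnc : ¬ ∀ z, φ z = φ 0) {n : ℝ} (hn : 0 < n) : ∃ z, ‖φ z‖ < n := by
  by_contra hb
  push_neg at hb
  refine hnc fun z => inv_injective ?_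
  refine (hd.inv h0).apply_eq_apply_of_bounded
    (isBounded_iff_forall_norm_le.mpr ⟨n⁻¹, ?_⟩) z 0
  rintro x ⟨w, rfl⟩
  rw [Pi.inv_apply, norm_inv]
  exact inv_anti₀ hn (hb w)

/-- On any connected component of `{|φ| > n}`, a nonconstant nonvanishing entire function
is unbounded.  (Proof via the maximum modulus principle applied to `φ^m / (z - w₀)`.) -/
lemma exists_norm_gt_on_component {φ : ℂ → ℂ} (hd : Differentiable ℂ φ)
    (h0 : ∀ z, φ z ≠ 0) (hnc : ¬ ∀ z, φ z = φ 0) {n : ℝ} (hn : 0 < n) {z0 : ℂ}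
    (hz0 : n < ‖φ z0‖) (C : ℝ) :
    ∃ z ∈ connectedComponentIn {w : ℂ | n < ‖φ w‖} z0, C < ‖φ z‖ := by
  set A : Set ℂ := {w : ℂ | n < ‖φ w‖} with hA
  have hcont : Continuous fun w => ‖φ w‖ := hd.continuous.norm
  have hAopen : IsOpen A := isOpen_lt continuous_const hcont
  set U := connectedComponentIn A z0 with hU
  by_contra hC
  push_neg at hC
  have hz0A : z0 ∈ A := hz0
  have hz0U : z0 ∈ U := mem_connectedComponentIn hz0A
  have hUA : U ⊆ A := connectedComponentIn_subset A z0
  have hCz0 : n < C := lt_of_lt_of_le hz0 (hC z0 hz0U)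
  have hCpos : 0 < C := hn.trans hCz0
  obtain ⟨w0, hw0⟩ := exists_norm_lt_aux hd h0 hnc hn
  have hWopen : IsOpen {w : ℂ | ‖φ w‖ < n} := isOpen_lt hcont continuous_const
  obtain ⟨r0, hr0, hball⟩ := Metric.isOpen_iff.mp hWopen w0 hw0
  have hclU_ge : closure U ⊆ {w : ℂ | n ≤ ‖φ w‖} :=
    closure_minimal (fun w hw => show n ≤ ‖φ w‖ from le_of_lt (hUA hw)) (isClosed_le continuous_const hcont)
  have hdist : ∀ z ∈ closure U, r0 ≤ dist z w0 := by
    intro z hz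
    by_contra hlt
    push_neg at hlt
    have hzb : z ∈ ball w0 r0 := mem_ball.mpr hlt
    exact absurd (show ‖φ z‖ < n from hball hzb) (not_lt.mpr (hclU_ge hz))
  have hw0U : w0 ∉ closure U := by
    intro hw
    have := hdist w0 hw
    rw [dist_self] at this
    exact absurd this (not_le.mpr hr0)
  have hclU_le : closure U ⊆ {w : ℂ | ‖φ w‖ ≤ C} :=
    closure_minimal (fun z hz => hC z hz) (isClosed_le hcont continuous_const)
  have hUopen : IsOpen U := hAopen.connectedComponentIn
  have hfr : ∀ w ∈ frontier U, ‖φ w‖ ≤ n := by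
    intro w hw
    by_contra hlt
    push_neg at hlt
    have hwA : w ∈ A := hlt
    have hwV : w ∈ connectedComponentIn A w := mem_connectedComponentIn hwA
    have hwcl : w ∈ closure U := frontier_subset_closure hw
    obtain ⟨y, hyV, hyU⟩ : (connectedComponentIn A w ∩ U).Nonempty :=
      mem_closure_iff.mp hwcl _ hAopen.connectedComponentIn hwV
    have hsub : U ∪ connectedComponentIn A w ⊆ U := by
      refine IsPreconnected.subset_connectedComponentIn ?_ (Or.inl hz0U) ?_
      · exact IsPreconnected.union y hyU hyV isPreconnected_connectedComponentIn
          isPreconnected_connectedComponentIn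
      · exact union_subset hUA (connectedComponentIn_subset A w)
    have hwU : w ∈ U := hsub (Or.inr hwV)
    rw [hUopen.frontier_eq] at hw
    exact hw.2 hwU
  -- the key estimate, for every `m`
  have key : ∀ m : ℕ, (‖φ z0‖ / n) ^ m ≤ dist z0 w0 / r0 := by
    intro m
    have hnM : (0:ℝ) < n ^ m := pow_pos hn m
    have hCM : (0:ℝ) < C ^ m := pow_pos hCpos m
    set R : ℝ := ‖z0‖ + ‖w0‖ + C ^ m * (n ^ m)⁻¹ * r0 + 1 with hRdef
    have hterm : 0 < C ^ m * (n ^ m)⁻¹ * r0 := by positivity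
    have hRz0 : ‖z0‖ < R := by
      have h1 : (0:ℝ) ≤ ‖w0‖ := norm_nonneg _
      rw [hRdef]; linarith
    have hRpos : 0 < R := lt_of_le_of_lt (norm_nonneg z0) hRz0
    set D := U ∩ Metric.ball (0:ℂ) R with hD
    set ψ : ℂ → ℂ := fun z => (φ z) ^ m * (z - w0)⁻¹ with hψ
    have hclDU : closure D ⊆ closure U := closure_mono inter_subset_left
    have hψdiff : ∀ z : ℂ, z ≠ w0 → DifferentiableAt ℂ ψ z := fun z hz =>
      ((hd z).pow m).mul ((differentiableAt_id.sub (differentiableAt_const w0)).inv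
        (sub_ne_zero.mpr hz))
    have hDne : ∀ z ∈ closure D, z ≠ w0 := fun z hz he => hw0U (hclDU (he ▸ hz))
    have hψ_dc : DiffContOnCl ℂ ψ D :=
      ⟨fun z hz => (hψdiff z (hDne z (subset_closure hz))).differentiableWithinAt,
       fun z hz => (hψdiff z (hDne z hz)).continuousAt.continuousWithinAt⟩
    have hDbdd : IsBounded D := Metric.isBounded_ball.subset inter_subset_right
    have hnorm : ∀ z : ℂ, ‖ψ z‖ = ‖φ z‖ ^ m * ‖z - w0‖⁻¹ := by
      intro z
      rw [hψ]
      simp [norm_mul, norm_pow, norm_inv]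
    have hfront : ∀ z ∈ frontier D, ‖ψ z‖ ≤ n ^ m / r0 := by
      intro z hz
      have hz' := frontier_inter_subset U (Metric.ball (0:ℂ) R) hz
      rw [hnorm z, div_eq_mul_inv]
      rcases hz' with h1 | h2
      · -- `z` is on the frontier of `U`
        have hzfU : z ∈ frontier U := h1.1
        have h_le : ‖φ z‖ ≤ n := hfr z hzfU
        have hdz : r0 ≤ ‖z - w0‖ := by
          have := hdist z (frontier_subset_closure hzfU)
          rwa [dist_eq_norm] at this
        exact mul_le_mul (pow_le_pow_left₀ (norm_nonneg _) h_le m)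
          (inv_anti₀ hr0 hdz) (by positivity) (by positivity)
      · -- `z` is on the sphere of radius `R`
        have hzcl : z ∈ closure U := h2.1
        have hzR : ‖z‖ = R := by
          have hfb := h2.2
          rw [frontier_ball (0:ℂ) hRpos.ne'] at hfb
          simpa using hfb
        have hφC : ‖φ z‖ ≤ C := hclU_le hzcl
        have hlb : C ^ m * (n ^ m)⁻¹ * r0 ≤ ‖z - w0‖ := by
          have h1 : ‖z‖ - ‖w0‖ ≤ ‖z - w0‖ := norm_sub_norm_le z w0
          have h2' : (0:ℝ) ≤ ‖z0‖ := norm_nonneg _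
          rw [hzR, hRdef] at h1
          linarith
        have hlbpos : (0:ℝ) < C ^ m * (n ^ m)⁻¹ * r0 := hterm
        calc ‖φ z‖ ^ m * ‖z - w0‖⁻¹
            ≤ C ^ m * (C ^ m * (n ^ m)⁻¹ * r0)⁻¹ :=
              mul_le_mul (pow_le_pow_left₀ (norm_nonneg _) hφC m)
                (inv_anti₀ hlbpos hlb) (by positivity) (by positivity)
          _ = n ^ m * r0⁻¹ := by
              field_simp
    have hz0D : z0 ∈ closure D := by
      refine subset_closure ⟨hz0U, ?_⟩
      rw [mem_ball_zero_iff]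
      exact hRz0
    have hmax := Complex.norm_le_of_forall_mem_frontier_norm_le hDbdd hψ_dc hfront hz0D
    rw [hnorm z0] at hmax
    have hdz0 : r0 ≤ ‖z0 - w0‖ := by
      have := hdist z0 (subset_closure hz0U)
      rwa [dist_eq_norm] at this
    have hdpos : 0 < ‖z0 - w0‖ := lt_of_lt_of_le hr0 hdz0
    rw [dist_eq_norm, div_pow, div_le_div_iff₀ hnM hr0]
    have h1 : ‖φ z0‖ ^ m ≤ n ^ m / r0 * ‖z0 - w0‖ := by
      calc ‖φ z0‖ ^ m = ‖φ z0‖ ^ m * ‖z0 - w0‖⁻¹ * ‖z0 - w0‖ := by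
            rw [mul_assoc, inv_mul_cancel₀ hdpos.ne', mul_one]
        _ ≤ n ^ m / r0 * ‖z0 - w0‖ := mul_le_mul_of_nonneg_right hmax hdpos.le
    calc ‖φ z0‖ ^ m * r0 ≤ (n ^ m / r0 * ‖z0 - w0‖) * r0 :=
          mul_le_mul_of_nonneg_right h1 hr0.le
      _ = ‖z0 - w0‖ * n ^ m := by field_simp
  have hρ : 1 < ‖φ z0‖ / n := (one_lt_div hn).mpr hz0
  obtain ⟨m, hm⟩ := pow_unbounded_of_one_lt (dist z0 w0 / r0) hρ
  exact absurd (key m) (not_le.mpr hm)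

/-- For a nonconstant nonvanishing entire function `φ`, there is a continuous curve
on `[0,∞)` along which `‖φ‖` grows at least linearly (so `‖φ∘γ‖ → ∞`). -/
lemma exists_escape_curve {φ : ℂ → ℂ} (hd : Differentiable ℂ φ) (h0 : ∀ z, φ z ≠ 0)
    (hnc : ¬ ∀ z, φ z = φ 0) :
    ∃ γ : ℝ → ℂ, ContinuousOn γ (Set.Ici 0) ∧ ∀ t : ℝ, 0 ≤ t → t ≤ ‖φ (γ t)‖ := by
  set A : ℕ → Set ℂ := fun k => {w : ℂ | (k : ℝ) + 1 < ‖φ w‖} with hA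
  have step : ∀ (k : ℕ) (zc : ℂ), zc ∈ A k → ∃ z', z' ∈ A (k+1) ∧ JoinedIn (A k) zc z' := by
    intro k zc hzc
    have hk : (0:ℝ) < (k:ℝ) + 1 := by positivity
    obtain ⟨z', hz'U, hz'⟩ := exists_norm_gt_on_component hd h0 hnc hk hzc ((k:ℝ) + 2)
    refine ⟨z', ?_, ?_⟩
    · show ((k+1 : ℕ) : ℝ) + 1 < ‖φ z'‖
      push_cast
      linarith
    · have hAopen : IsOpen (A k) := isOpen_lt continuous_const hd.continuous.norm
      have hconn : IsConnected (connectedComponentIn (A k) zc) :=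
        isConnected_connectedComponentIn_iff.mpr hzc
      have hpc : IsPathConnected (connectedComponentIn (A k) zc) :=
        (hAopen.connectedComponentIn.isConnected_iff_isPathConnected).mp hconn
      exact (hpc.joinedIn zc (mem_connectedComponentIn hzc) z' hz'U).mono
        (connectedComponentIn_subset _ _)
  obtain ⟨c0, hc0⟩ := exists_norm_gt_aux hd hnc 1
  have hc0' : c0 ∈ A 0 := by
    show ((0:ℕ) : ℝ) + 1 < ‖φ c0‖
    push_cast
    linarith
  let S : (k : ℕ) → {w : ℂ // w ∈ A k} := fun k =>
    Nat.rec ⟨c0, hc0'⟩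
      (fun k ih => ⟨(step k ih.1 ih.2).choose, (step k ih.1 ih.2).choose_spec.1⟩) k
  have hJ : ∀ k, JoinedIn (A k) (S k).1 (S (k+1)).1 := fun k =>
    (step k (S k).1 (S k).2).choose_spec.2
  let p : ∀ k, Path (S k).1 (S (k+1)).1 := fun k => (hJ k).somePath
  have hpmem : ∀ k (s : unitInterval), p k s ∈ A k := fun k => (hJ k).somePath_mem
  let γ : ℝ → ℂ := fun t => (p ⌊t⌋₊).extend (t - ⌊t⌋₊)
  have hmem : ∀ k : ℕ, ∀ t ∈ Icc (k:ℝ) ((k:ℝ)+1), (p k).extend (t - k) ∈ A k := by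
    rintro k t ⟨ht1, ht2⟩
    have hs1 : 0 ≤ t - (k:ℝ) := by linarith
    have hs2 : t - (k:ℝ) ≤ 1 := by linarith
    rw [(p k).extend_apply ⟨hs1, hs2⟩]
    exact hpmem k _
  have hEq : ∀ k : ℕ, EqOn γ (fun t => (p k).extend (t - k)) (Icc (k:ℝ) ((k:ℝ)+1)) := by
    rintro k t ⟨ht1, ht2⟩
    rcases lt_or_eq_of_le ht2 with hlt | heq
    · have h0t : (0:ℝ) ≤ t := le_trans (by positivity) ht1
      have hfl : ⌊t⌋₊ = k := by
        rw [Nat.floor_eq_iff h0t]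
        exact ⟨ht1, hlt⟩
      show (p ⌊t⌋₊).extend (t - ⌊t⌋₊) = (p k).extend (t - k)
      rw [hfl]
    · have hkk : ((k+1 : ℕ) : ℝ) = t := by push_cast; linarith
      have hfl : ⌊t⌋₊ = k + 1 := by rw [← hkk, Nat.floor_natCast]
      show (p ⌊t⌋₊).extend (t - ⌊t⌋₊) = (p k).extend (t - k)
      rw [hfl]
      have e1 : t - ((k+1 : ℕ) : ℝ) = 0 := by push_cast; linarith
      have e2 : t - (k : ℝ) = 1 := by push_cast; linarith
      rw [e1, e2, Path.extend_zero, Path.extend_one]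
  have hq : ∀ k : ℕ, Continuous fun s : ℝ => (p k).extend (s - k) := fun k =>
    (p k).continuous_extend.comp (continuous_id.sub continuous_const)
  have hcont : ContinuousOn γ (Set.Ici 0) := by
    intro t ht
    have h0t : (0:ℝ) ≤ t := ht
    rcases eq_or_lt_of_le (Nat.floor_le h0t : ((⌊t⌋₊ : ℝ) ≤ t)) with heq | hlt
    · -- `t` is a natural number
      set k := ⌊t⌋₊ with hk
      have hright : ContinuousWithinAt γ (Icc (k:ℝ) ((k:ℝ)+1)) t :=
        ((hq k).continuousWithinAt).congr (fun s hs => hEq k hs)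
          (hEq k ⟨heq.le, by rw [← heq]; linarith⟩)
      rcases Nat.eq_zero_or_pos k with hk0 | hkpos
      · -- t = 0 : continuity within `Ici 0` from the right
        have ht0 : t = 0 := by rw [← heq, hk0]; norm_num
        refine hright.mono_of_mem_nhdsWithin ?_
        rw [ht0]
        have : Icc (0:ℝ) 1 ∈ 𝓝[Set.Ici (0:ℝ)] (0:ℝ) :=
          Icc_mem_nhdsGE_of_mem ⟨le_refl _, by norm_num⟩
        simpa [hk0] using this
      · -- t = k ≥ 1 : glue left and right pieces
        obtain ⟨j, hj⟩ : ∃ j, k = j + 1 := ⟨k - 1, (Nat.succ_pred_eq_of_pos hkpos).symm⟩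
        have hkr : (k:ℝ) = (j:ℝ) + 1 := by rw [hj]; push_cast; ring
        have htj : t = (j:ℝ) + 1 := by rw [← heq, hkr]
        have hleft : ContinuousWithinAt γ (Icc (j:ℝ) ((j:ℝ)+1)) t :=
          ((hq j).continuousWithinAt).congr (fun s hs => hEq j hs)
            (hEq j ⟨by rw [htj]; linarith, by rw [htj]⟩)
        have hun : ContinuousWithinAt γ (Icc (j:ℝ) ((j:ℝ)+1) ∪
            Icc ((k:ℕ):ℝ) (((k:ℕ):ℝ)+1)) t := hleft.union hright
        have hnhds : Icc (j:ℝ) ((j:ℝ)+1) ∪ Icc ((k:ℕ):ℝ) (((k:ℕ):ℝ)+1) ∈ 𝓝 t := by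
          refine Filter.mem_of_superset (Ioo_mem_nhds (a := (j:ℝ)) (b := (j:ℝ)+2) ?_ ?_) ?_
          · rw [htj]; linarith
          · rw [htj]; linarith
          · rintro s ⟨hs1, hs2⟩
            rcases le_or_gt s ((j:ℝ)+1) with hc | hc
            · exact Or.inl ⟨hs1.le, hc⟩
            · exact Or.inr ⟨by rw [hkr]; linarith, by rw [hkr]; linarith⟩
        exact (hun.continuousAt hnhds).continuousWithinAt
    · -- `t` is not a natural number: local identification with one piece
      have ht1 : t < (⌊t⌋₊:ℝ) + 1 := Nat.lt_floor_add_one t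
      have hev : (fun s => (p ⌊t⌋₊).extend (s - ⌊t⌋₊)) =ᶠ[𝓝 t] γ := by
        filter_upwards [Ioo_mem_nhds hlt ht1] with s hs
        exact (hEq ⌊t⌋₊ ⟨hs.1.le, hs.2.le⟩).symm
      exact ((hq ⌊t⌋₊).continuousAt.congr hev).continuousWithinAt
  refine ⟨γ, hcont, ?_⟩
  intro t ht
  have h1 : γ t ∈ A ⌊t⌋₊ :=
    hmem ⌊t⌋₊ t ⟨Nat.floor_le ht, (Nat.lt_floor_add_one t).le⟩
  have h2 : (⌊t⌋₊ : ℝ) + 1 < ‖φ (γ t)‖ := h1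
  have h3 : t < (⌊t⌋₊ : ℝ) + 1 := Nat.lt_floor_add_one t
  linarith

/-- Proposition 3.10: if for some `g ∈ elh(ℂ)` every finite asymptotic tract of `f ∘ g`
is a finite asymptotic tract of `g` (i.e. `T_f(g) = T_f(f ∘ g)`), then `f` is surjective. -/
theorem surjective_of_tract_eq (f : ℂ → ℂ) (hf : elh f)
    (h : ∃ g : ℂ → ℂ, elh g ∧ ∀ γ : ℝ → ℂ, IsFiniteTract (f ∘ g) γ → IsFiniteTract g γ) :
    Set.range f = Set.univ := by
  by_contra hne
  obtain ⟨a, ha⟩ := (Set.ne_univ_iff_exists_notMem _).mp hne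
  obtain ⟨g, hg, htr⟩ := h
  set φ : ℂ → ℂ := fun z => (f (g z) - a)⁻¹ with hφ
  have hsub : ∀ z : ℂ, f (g z) - a ≠ 0 := fun z => sub_ne_zero.mpr fun e => ha ⟨g z, e⟩
  have hφd : Differentiable ℂ φ := ((hf.1.comp hg.1).sub_const a).inv hsub
  have hφ0 : ∀ z, φ z ≠ 0 := fun z => inv_ne_zero (hsub z)
  have hnc : ¬ ∀ z, φ z = φ 0 := by
    intro hcon
    have hfg : ∀ z : ℂ, f (g z) = f (g 0) := fun z =>
      sub_left_inj.mp (inv_injective (hcon z))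
    have hconst : (f ∘ g) = fun _ => f (g 0) := funext fun z => hfg z
    have h1 : deriv (f ∘ g) 0 = deriv f (g 0) * deriv g 0 :=
      deriv_comp 0 (hf.1 _) (hg.1 _)
    rw [hconst, deriv_const] at h1
    exact (mul_ne_zero (hf.2.1 (g 0)) (hg.2.1 0)) h1.symm
  obtain ⟨γ, hγc, hγb⟩ := exists_escape_curve hφd hφ0 hnc
  have hφγ : Tendsto (fun t => ‖φ (γ t)‖) atTop atTop :=
    tendsto_atTop_mono' atTop
      (by filter_upwards [eventually_ge_atTop (0:ℝ)] with t ht using hγb t ht) tendsto_id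
  have habsγ : Tendsto (fun t => ‖γ t‖) atTop atTop := by
    rw [Filter.tendsto_atTop]
    intro b
    obtain ⟨M, hM⟩ := (isCompact_closedBall (0:ℂ) b).exists_bound_of_continuousOn
      (hφd.continuous.continuousOn)
    filter_upwards [hφγ.eventually (eventually_gt_atTop M)] with t ht
    by_contra hb
    push_neg at hb
    have hmem : γ t ∈ Metric.closedBall (0:ℂ) b := by
      rw [mem_closedBall_zero_iff]
      exact hb.le
    exact absurd (hM (γ t) hmem) (not_le.mpr ht)
  have htla : Tendsto (fun t => (f ∘ g) (γ t)) atTop (𝓝 a) := by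
    have hsmall : Tendsto (fun t => (φ (γ t))⁻¹) atTop (𝓝 0) := by
      rw [tendsto_zero_iff_norm_tendsto_zero]
      simp only [norm_inv]
      exact hφγ.inv_tendsto_atTop
    have hadd : Tendsto (fun t => a + (φ (γ t))⁻¹) atTop (𝓝 (a + 0)) :=
      tendsto_const_nhds.add hsmall
    rw [add_zero] at hadd
    refine hadd.congr fun t => ?_
    show a + ((f (g (γ t)) - a)⁻¹)⁻¹ = (f ∘ g) (γ t)
    rw [inv_inv]
    show a + (f (g (γ t)) - a) = f (g (γ t))
    ring
  have hτ : IsFiniteTract (f ∘ g) γ := ⟨hγc, habsγ, a, htla⟩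
  obtain ⟨-, -, b, hb⟩ := htr γ hτ
  have h2 : Tendsto (fun t => (f ∘ g) (γ t)) atTop (𝓝 (f b)) :=
    (hf.1.continuous.tendsto b).comp hb
  have hfb : f b = a := tendsto_nhds_unique h2 htla
  exact ha ⟨b, hfb⟩
end

section
/- For f ∈ elh(ℂ), the following are equivalent: (1) f is not a translation, i.e., there is no a ∈ ℂ with f(z) = z + a for all z; (2) for every g ∈ elh(ℂ), the composition g ∘ f is not a translation; (3) for every g ∈ elh(ℂ), the composition f ∘ g is not a translation. (Proposition 3.11.) -/
open Polynomial Metric Bornology Filter Set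

lemma entire_poly_growth : ∀ (n : ℕ) (f : ℂ → ℂ), Differentiable ℂ f →
    ∀ (C R : ℝ), (∀ z : ℂ, R ≤ ‖z‖ → ‖f z‖ ≤ C * ‖z‖ ^ n) →
    ∃ p : ℂ[X], ∀ z, f z = p.eval z := by
  intro n
  induction n with
  | zero =>
    intro f hf C R hC
    obtain ⟨D, hD⟩ := (isCompact_closedBall (0:ℂ) (max R 0)).exists_bound_of_continuousOn
      hf.continuous.continuousOn
    have hb : IsBounded (Set.range f) := by
      rw [isBounded_iff_forall_norm_le]
      refine ⟨max C D, ?_⟩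
      rintro x ⟨z, rfl⟩
      rcases le_or_gt R ‖z‖ with h | h
      · have := hC z h; simp only [pow_zero, mul_one] at this
        exact this.trans (le_max_left _ _)
      · have hz : z ∈ closedBall (0:ℂ) (max R 0) := by
          simp [mem_closedBall, dist_zero_right]
          left; exact h.le
        exact (hD z hz).trans (le_max_right _ _)
    obtain ⟨c, hc⟩ := hf.exists_const_forall_eq_of_bounded hb
    exact ⟨Polynomial.C c, fun z => by simp [hc z]⟩
  | succ n ih =>
    intro f hf C R hC
    have hg : Differentiable ℂ (dslope f 0) := by
      rw [← differentiableOn_univ]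
      exact (Complex.differentiableOn_dslope (f := f) (c := 0) Filter.univ_mem).mpr hf.differentiableOn
    have hbound : ∀ z : ℂ, max R 1 ≤ ‖z‖ → ‖dslope f 0 z‖ ≤ (C + ‖f 0‖) * ‖z‖ ^ n := by
      intro z hz
      have h1 : (1:ℝ) ≤ ‖z‖ := le_trans (le_max_right _ _) hz
      have hz0 : z ≠ 0 := by
        intro h; rw [h] at h1; simp at h1; linarith
      have hzpos : (0:ℝ) < ‖z‖ := lt_of_lt_of_le one_pos h1
      rw [dslope_of_ne _ hz0, slope_def_field]
      have h2 : ‖(f z - f 0) / (z - 0)‖ = ‖f z - f 0‖ / ‖z‖ := by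
        rw [norm_div]; simp
      rw [h2, div_le_iff₀ hzpos]
      have h3 : ‖f z - f 0‖ ≤ C * ‖z‖ ^ (n+1) + ‖f 0‖ :=
        (norm_sub_le _ _).trans (by
          have := hC z (le_trans (le_max_left _ _) hz); linarith)
      have h4 : (1:ℝ) ≤ ‖z‖ ^ n := one_le_pow₀ h1
      have h5 : ‖z‖ ^ (n+1) = ‖z‖ ^ n * ‖z‖ := pow_succ _ _
      rw [h5] at h3
      have h6 : ‖f 0‖ ≤ ‖f 0‖ * (‖z‖ ^ n * ‖z‖) :=
        le_mul_of_one_le_right (norm_nonneg _) (by nlinarith)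
      nlinarith [h3, h6]
    obtain ⟨p, hp⟩ := ih _ hg (C + ‖f 0‖) (max R 1) hbound
    refine ⟨Polynomial.C (f 0) + Polynomial.X * p, fun z => ?_⟩
    by_cases hz : z = 0
    · simp [hz]
    · have := hp z
      rw [dslope_of_ne _ hz, slope_def_field] at this
      have hz' : z - 0 ≠ 0 := by simpa using hz
      rw [div_eq_iff hz'] at this
      simp only [eval_add, eval_mul, eval_C, eval_X]
      linear_combination this


lemma elh_poly_translation (f : ℂ → ℂ) (hf : elh f) (p : ℂ[X])
    (hp : ∀ z, f z = p.eval z) : ∀ z, f z = z + f 0 := by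
  obtain ⟨hd, hnz, h0⟩ := hf
  have hfe : f = fun z => p.eval z := funext hp
  have hderiv : ∀ z : ℂ, deriv f z = p.derivative.eval z := by
    intro z; rw [hfe]; exact Polynomial.deriv (p := p)
  have hdeg : p.derivative.degree ≤ 0 := by
    by_contra h
    push_neg at h
    obtain ⟨z, hz⟩ := Complex.exists_root h
    exact hnz z (by rw [hderiv z]; exact hz)
  have hC : p.derivative = Polynomial.C (p.derivative.coeff 0) :=
    Polynomial.eq_C_of_degree_le_zero hdeg
  have hone : ∀ z : ℂ, deriv f z = 1 := by
    intro z
    have h1 := hderiv 0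
    rw [h0, hC] at h1
    simp at h1
    rw [hderiv z, hC]
    simp [← h1]
  have hsub : ∀ z : ℂ, deriv (fun w => f w - w) z = 0 := by
    intro z
    rw [deriv_fun_sub (hd z) differentiableAt_fun_id]
    simp [hone z]
  have := is_const_of_deriv_eq_zero (hd.sub differentiable_fun_id) hsub
  intro z
  have h2 := this z 0
  simp at h2
  linear_combination h2


lemma key_lemma (f G : ℂ → ℂ) (hf : elh f) (hG : Differentiable ℂ G)
    (hinv : ∀ z, G (f z) = z) : ∀ z, f z = z + f 0 := by
  have hd : Differentiable ℂ f := hf.1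
  have hana : AnalyticOnNhd ℂ f Set.univ := hd.differentiableOn.analyticOnNhd isOpen_univ
  have hinj : Function.Injective f := fun a b hab => by rw [← hinv a, hab, hinv b]
  -- f ∘ G = id via open mapping + identity theorem
  have hopen : IsOpen (f '' Set.univ) := by
    rcases hana.is_constant_or_isOpen isPreconnected_univ with ⟨w, hw⟩ | h
    · have : (0:ℂ) = 1 := hinj (by rw [hw 0 trivial, hw 1 trivial])
      norm_num at this
    · exact h _ Subset.rfl isOpen_univ
  have hGana : AnalyticOnNhd ℂ (fun w => f (G w)) Set.univ :=
    (hd.comp hG).differentiableOn.analyticOnNhd isOpen_univ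
  have hidana : AnalyticOnNhd ℂ (fun w : ℂ => w) Set.univ :=
    differentiable_id.differentiableOn.analyticOnNhd isOpen_univ
  have hev : (fun w => f (G w)) =ᶠ[nhds (f 0)] fun w => w := by
    filter_upwards [hopen.mem_nhds ⟨0, trivial, rfl⟩] with w hw
    obtain ⟨z, -, rfl⟩ := hw
    rw [hinv z]
  have hrinv : ∀ w, f (G w) = w := fun w =>
    hGana.eqOn_of_preconnected_of_eventuallyEq hidana isPreconnected_univ
      (Set.mem_univ (f 0)) hev (Set.mem_univ w)
  -- properness
  have hproper : ∀ R : ℝ, ∃ M : ℝ, 0 ≤ M ∧ ∀ z : ℂ, M < ‖z‖ → R < ‖f z‖ := by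
    intro R
    have hK : IsCompact (G '' closedBall 0 R) := (isCompact_closedBall 0 R).image hG.continuous
    obtain ⟨M, hM⟩ := isBounded_iff_forall_norm_le.mp hK.isBounded
    refine ⟨max M 0, le_max_right _ _, fun z hz => ?_⟩
    by_contra hle
    push_neg at hle
    have hmem : z ∈ G '' closedBall 0 R :=
      ⟨f z, by simpa [mem_closedBall, dist_zero_right] using hle, hinv z⟩
    exact absurd (hM z hmem) (not_le.mpr (lt_of_le_of_lt (le_max_left M 0) hz))
  obtain ⟨M₁, hM₁0, hM₁⟩ := hproper 1
  set r : ℝ := (M₁ + 1)⁻¹ with hrdef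
  have hrpos : 0 < r := inv_pos.mpr (by linarith)
  have hinvbig : ∀ z : ℂ, z ≠ 0 → ‖z‖ < r → M₁ < ‖z⁻¹‖ := by
    intro z hz hlt
    rw [norm_inv]
    have hzpos : 0 < ‖z‖ := norm_pos_iff.mpr hz
    have : M₁ + 1 < ‖z‖⁻¹ := by
      rw [hrdef] at hlt
      calc M₁ + 1 = ((M₁+1)⁻¹)⁻¹ := by rw [inv_inv]
        _ < ‖z‖⁻¹ := by
            apply inv_strictAnti₀ hzpos hlt
    linarith
  set H : ℂ → ℂ := fun z => if z = 0 then 0 else (f z⁻¹)⁻¹ with hHdef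
  have hHval : ∀ z : ℂ, z ≠ 0 → H z = (f z⁻¹)⁻¹ := fun z hz => if_neg hz
  have hfne : ∀ z : ℂ, z ≠ 0 → ‖z‖ < r → f z⁻¹ ≠ 0 := by
    intro z hz hlt h
    have := hM₁ z⁻¹ (hinvbig z hz hlt)
    rw [h] at this; simp at this; linarith
  -- eventually facts on the punctured neighborhood
  have hevsmall : ∀ᶠ z in nhdsWithin (0:ℂ) {(0:ℂ)}ᶜ, z ≠ 0 ∧ ‖z‖ < r := by
    have h1 : ∀ᶠ z in nhdsWithin (0:ℂ) {(0:ℂ)}ᶜ, z ≠ 0 :=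
      eventually_mem_nhdsWithin
    have h2 : ∀ᶠ z in nhdsWithin (0:ℂ) {(0:ℂ)}ᶜ, ‖z‖ < r :=
      eventually_nhdsWithin_of_eventually_nhds (by
        filter_upwards [Metric.ball_mem_nhds (0:ℂ) hrpos] with z hz
        simpa [mem_ball, dist_zero_right] using hz)
    exact h1.and h2
  have hHdiff : ∀ᶠ z in nhdsWithin (0:ℂ) {(0:ℂ)}ᶜ, DifferentiableAt ℂ H z := by
    filter_upwards [hevsmall] with z ⟨hz, hlt⟩
    have h1 : DifferentiableAt ℂ (fun w : ℂ => (f w⁻¹)⁻¹) z :=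
      DifferentiableAt.inv ((hd _).comp z (differentiableAt_inv hz)) (hfne z hz hlt)
    apply h1.congr_of_eventuallyEq
    filter_upwards [isOpen_compl_singleton.mem_nhds hz] with w hw
    exact hHval w hw
  have htend : Tendsto H (nhdsWithin (0:ℂ) {(0:ℂ)}ᶜ) (nhds 0) := by
    rw [NormedAddCommGroup.tendsto_nhds_zero]
    intro ε hε
    obtain ⟨M, hM0, hMp⟩ := hproper ε⁻¹
    have hMr : (0:ℝ) < (M + 1)⁻¹ := inv_pos.mpr (by linarith)
    have : ∀ᶠ z in nhdsWithin (0:ℂ) {(0:ℂ)}ᶜ, z ≠ 0 ∧ ‖z‖ < (M+1)⁻¹ := by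
      refine (eventually_mem_nhdsWithin).and
        (eventually_nhdsWithin_of_eventually_nhds ?_)
      filter_upwards [Metric.ball_mem_nhds (0:ℂ) hMr] with z hz
      simpa [mem_ball, dist_zero_right] using hz
    filter_upwards [this] with z ⟨hz, hlt⟩
    have hzpos : 0 < ‖z‖ := norm_pos_iff.mpr hz
    have hMlt : M < ‖z⁻¹‖ := by
      rw [norm_inv]
      have : M + 1 < ‖z‖⁻¹ := by
        calc M + 1 = ((M+1)⁻¹)⁻¹ := by rw [inv_inv]
          _ < ‖z‖⁻¹ := inv_strictAnti₀ hzpos hlt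
      linarith
    have hbig : ε⁻¹ < ‖f z⁻¹‖ := hMp _ hMlt
    rw [hHval z hz, norm_inv]
    calc ‖f z⁻¹‖⁻¹ < (ε⁻¹)⁻¹ := inv_strictAnti₀ (inv_pos.mpr hε) hbig
      _ = ε := inv_inv ε
  have hHcont : ContinuousAt H 0 := by
    have hH0 : H 0 = 0 := if_pos rfl
    have hsup : Tendsto H (nhdsWithin (0:ℂ) {(0:ℂ)}ᶜ ⊔ pure 0) (nhds 0) := by
      rw [tendsto_sup]
      exact ⟨htend, by rw [tendsto_pure_left]; intro s hs; rw [hH0]; exact mem_of_mem_nhds hs⟩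
    rw [ContinuousAt, hH0]
    rwa [nhdsNE_sup_pure] at hsup
  have hHana : AnalyticAt ℂ H 0 :=
    Complex.analyticAt_of_differentiable_on_punctured_nhds_of_continuousAt hHdiff hHcont
  -- order of vanishing
  have hHne : ∀ᶠ z in nhdsWithin (0:ℂ) {(0:ℂ)}ᶜ, H z ≠ 0 := by
    filter_upwards [hevsmall] with z ⟨hz, hlt⟩
    rw [hHval z hz]
    exact inv_ne_zero (hfne z hz hlt)
  have hord : analyticOrderAt H 0 ≠ ⊤ := by
    intro h
    rw [analyticOrderAt_eq_top] at h
    obtain ⟨z, hz1, hz2⟩ := (hHne.and (h.filter_mono nhdsWithin_le_nhds)).exists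
    exact hz1 hz2
  obtain ⟨n, hn⟩ := WithTop.ne_top_iff_exists.mp hord
  obtain ⟨u, huana, hu0, hueq⟩ := (hHana.analyticOrderAt_eq_natCast (n := n)).mp hn.symm
  -- bound near 0
  have hucont : ∀ᶠ z in nhds (0:ℂ), ‖u 0‖ / 2 < ‖u z‖ := by
    have hopen2 : IsOpen {w : ℂ | ‖u 0‖ / 2 < ‖w‖} := isOpen_lt continuous_const continuous_norm
    have hmem2 : u 0 ∈ {w : ℂ | ‖u 0‖ / 2 < ‖w‖} := half_lt_self (norm_pos_iff.mpr hu0)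
    exact huana.continuousAt.eventually_mem (hopen2.mem_nhds hmem2)
  obtain ⟨δ, hδpos, hδ⟩ := Metric.eventually_nhds_iff.mp (hueq.and hucont)
  -- global growth bound
  set R0 : ℝ := (min δ r)⁻¹ + 1 with hR0
  have hminpos : 0 < min δ r := lt_min hδpos hrpos
  have hbound : ∀ w : ℂ, R0 ≤ ‖w‖ → ‖f w‖ ≤ 2 / ‖u 0‖ * ‖w‖ ^ n := by
    intro w hw
    have hwpos : 0 < ‖w‖ := lt_of_lt_of_le (by positivity) hw
    have hwne : w ≠ 0 := norm_pos_iff.mp hwpos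
    set z : ℂ := w⁻¹ with hzdef
    have hzne : z ≠ 0 := inv_ne_zero hwne
    have hznorm : ‖z‖ < min δ r := by
      rw [hzdef, norm_inv]
      calc ‖w‖⁻¹ ≤ ((min δ r)⁻¹ + 1)⁻¹ := by
            apply inv_anti₀ (by positivity) hw
        _ < min δ r := by
            rw [← inv_inv (min δ r)]
            apply inv_strictAnti₀ (by positivity) (by simp)
    obtain ⟨heq, hult⟩ := hδ (show dist z 0 < δ by
      rw [dist_zero_right]; exact lt_of_lt_of_le hznorm (min_le_left _ _))
    have hzr : ‖z‖ < r := lt_of_lt_of_le hznorm (min_le_right _ _)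
    have hHz : H z = (f w)⁻¹ := by rw [hHval z hzne, hzdef, inv_inv]
    have hfwne : f w ≠ 0 := by
      have := hfne z hzne hzr
      rwa [hzdef, inv_inv] at this
    -- ‖f w‖⁻¹ = ‖z‖^n * ‖u z‖
    have hnorm : ‖f w‖⁻¹ = ‖z‖ ^ n * ‖u z‖ := by
      rw [← norm_inv, ← hHz, heq]
      simp [norm_smul, norm_pow]
    have hu0pos : 0 < ‖u 0‖ := norm_pos_iff.mpr hu0
    have huzpos : 0 < ‖u z‖ := lt_trans (by positivity) hult
    have hznpos : 0 < ‖z‖ ^ n := pow_pos (norm_pos_iff.mpr hzne) n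
    have h1 : ‖u 0‖ / 2 * ‖z‖ ^ n ≤ ‖f w‖⁻¹ := by
      rw [hnorm]
      calc ‖u 0‖ / 2 * ‖z‖ ^ n ≤ ‖u z‖ * ‖z‖ ^ n := by
            apply mul_le_mul_of_nonneg_right hult.le (le_of_lt hznpos)
        _ = ‖z‖ ^ n * ‖u z‖ := mul_comm _ _
    have hzw : ‖z‖ ^ n = (‖w‖ ^ n)⁻¹ := by
      rw [hzdef, norm_inv, inv_pow]
    have hfwpos : 0 < ‖f w‖ := norm_pos_iff.mpr hfwne
    -- from h1 : (‖u 0‖/2) * (‖w‖^n)⁻¹ ≤ ‖f w‖⁻¹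
    rw [hzw] at h1
    have hwn : 0 < ‖w‖ ^ n := pow_pos hwpos n
    have h2 : ‖f w‖ ≤ (‖u 0‖ / 2 * (‖w‖ ^ n)⁻¹)⁻¹ := by
      rw [← inv_inv (‖f w‖)]
      exact inv_anti₀ (by positivity) h1
    calc ‖f w‖ ≤ (‖u 0‖ / 2 * (‖w‖ ^ n)⁻¹)⁻¹ := h2
      _ = 2 / ‖u 0‖ * ‖w‖ ^ n := by field_simp
  obtain ⟨p, hp⟩ := entire_poly_growth n f hd (2 / ‖u 0‖) R0 hbound
  exact elh_poly_translation f hf p hp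

lemma elh_id : elh (fun z : ℂ => z) := by
  refine ⟨differentiable_id, ?_, ?_⟩ <;> simp [deriv_id'']

/-- Proposition 3.11: for `f ∈ elh(ℂ)` the following are equivalent: (1) `f` is not a
translation; (2) `g ∘ f` is never a translation for `g ∈ elh(ℂ)`; (3) `f ∘ g` is never a
translation for `g ∈ elh(ℂ)`. -/
theorem not_translation_iff (f : ℂ → ℂ) (hf : elh f) :
    ((¬ ∃ a : ℂ, ∀ z : ℂ, f z = z + a) ↔
      ∀ g : ℂ → ℂ, elh g → ¬ ∃ a : ℂ, ∀ z : ℂ, (g ∘ f) z = z + a) ∧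
    ((¬ ∃ a : ℂ, ∀ z : ℂ, f z = z + a) ↔
      ∀ g : ℂ → ℂ, elh g → ¬ ∃ a : ℂ, ∀ z : ℂ, (f ∘ g) z = z + a) := by
  constructor
  · constructor
    · intro hnot g hg ⟨a, ha⟩
      apply hnot
      have hinv : ∀ z : ℂ, (fun w => g w - a) (f z) = z := by
        intro z
        have := ha z
        simp only [Function.comp_apply] at this
        simp [this]
      have := key_lemma f (fun w => g w - a) hf (hg.1.sub_const a) hinv
      exact ⟨f 0, this⟩
    · intro h ⟨a, ha⟩
      exact h (fun z => z) elh_id ⟨a, fun z => by simpa using ha z⟩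
  · constructor
    · intro hnot g hg ⟨a, ha⟩
      apply hnot
      have hinv : ∀ z : ℂ, (fun w => f w - a) (g z) = z := by
        intro z
        have := ha z
        simp only [Function.comp_apply] at this
        simp [this]
      have hgtrans := key_lemma g (fun w => f w - a) hg (hf.1.sub_const a) hinv
      refine ⟨a - g 0, fun z => ?_⟩
      have h1 := ha (z - g 0)
      simp only [Function.comp_apply] at h1
      rw [hgtrans (z - g 0)] at h1
      have h2 : z - g 0 + g 0 = z := by ring
      rw [h2] at h1
      rw [h1]; ring
    · intro h ⟨a, ha⟩
      exact h (fun z => z) elh_id ⟨a, fun z => by simpa using ha z⟩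
end

section
/- Let f, g, h ∈ elh(ℂ) satisfy f ∘ g = f ∘ h and g ≢ h. Then there exists an entire function t : ℂ → ℂ such that g(z) = h(z) + e^{t(z)} for all z ∈ ℂ; equivalently, g(z) − h(z) ≠ 0 for every z ∈ ℂ. (Proposition 3.13.) -/
open Complex FormalMultilinearSeries Topology


set_option maxHeartbeats 2000000 in
lemma exists_primitive (v : ℂ → ℂ) (hv : Differentiable ℂ v) :
    ∃ F : ℂ → ℂ, Differentiable ℂ F ∧ deriv F = v := by
  set c : ℕ → ℂ := fun n => (n.factorial : ℂ)⁻¹ • iteratedDeriv n v 0 with hc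
  have hsum : ∀ z : ℂ, HasSum (fun n => c n • z ^ n) (v z) := by
    intro z
    have := Complex.hasSum_taylorSeries_of_entire hv (c := 0) (z := z)
    simpa [hc, smul_eq_mul, smul_smul, mul_comm, mul_assoc, mul_left_comm] using this
  set d : ℕ → ℂ := fun n => Nat.rec 0 (fun m _ => c m / (m + 1)) n with hd
  set q : FormalMultilinearSeries ℂ ℂ ℂ := ofScalars ℂ d with hq
  have hrad : q.radius = ⊤ := by
    rw [radius_eq_top_iff_summable_norm]
    intro r
    have hsc : Summable (fun n => ‖c n‖ * (r : ℝ) ^ n) := by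
      have := ((hsum (r : ℂ)).summable).norm
      simpa [norm_smul, norm_pow] using this
    have hs' : Summable (fun n => ‖c n‖ * (r : ℝ) ^ n * r) := hsc.mul_right _
    have key : Summable (fun n => ‖q (n + 1)‖ * (r : ℝ) ^ (n + 1)) := by
      refine hs'.of_nonneg_of_le (fun n => by positivity) (fun n => ?_)
      have h1 : ‖q (n + 1)‖ = ‖d (n + 1)‖ := ofScalars_norm ℂ d (n + 1)
      have h2 : ‖d (n + 1)‖ ≤ ‖c n‖ := by
        show ‖c n / ((n : ℂ) + 1)‖ ≤ ‖c n‖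
        rw [norm_div]
        apply div_le_self (norm_nonneg _)
        have he : ((n : ℂ) + 1) = ((n + 1 : ℕ) : ℂ) := by push_cast; ring
        rw [he, Complex.norm_natCast]
        exact_mod_cast Nat.succ_le_succ (Nat.zero_le n)
      calc ‖q (n + 1)‖ * (r : ℝ) ^ (n + 1) ≤ ‖c n‖ * (r : ℝ) ^ (n + 1) := by
            apply mul_le_mul_of_nonneg_right (h1 ▸ h2) (by positivity)
        _ = ‖c n‖ * (r : ℝ) ^ n * r := by ring
    exact (summable_nat_add_iff 1).1 key
  have hball : HasFPowerSeriesOnBall q.sum q 0 ⊤ := by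
    have := q.hasFPowerSeriesOnBall (by rw [hrad]; exact ENNReal.zero_lt_top)
    rwa [hrad] at this
  set F : ℂ → ℂ := q.sum with hF
  have hFd : Differentiable ℂ F := by
    rw [← differentiableOn_univ, ← Metric.emetric_ball_top 0]
    exact hball.differentiableOn
  have hderiv : HasFPowerSeriesOnBall (fderiv ℂ F) q.derivSeries 0 ⊤ := hball.fderiv
  have hkey : ∀ z : ℂ, z ≠ 0 → deriv F z = v z := by
    intro z hz
    have hmem : z ∈ Metric.eball (0 : ℂ) ⊤ := by simp
    have h1 : HasSum (fun n => q.derivSeries n fun _ => z) (fderiv ℂ F (0 + z)) :=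
      hderiv.hasSum hmem
    rw [zero_add] at h1
    have h2 := h1.mapL (ContinuousLinearMap.apply ℂ ℂ z)
    simp only [ContinuousLinearMap.apply_apply] at h2
    have h3 : ∀ n : ℕ, q.derivSeries n (fun _ => z) z = z * (c n • z ^ n) := by
      intro n
      rw [q.derivSeries_apply_diag n z]
      have : q (n + 1) (fun _ => z) = d (n + 1) • z ^ (n + 1) := by
        rw [hq]; exact ofScalars_apply_eq (𝕜 := ℂ) (E := ℂ) d z (n + 1)
      rw [this]
      show (n + 1 : ℕ) • ((c n / ((n : ℂ) + 1)) • z ^ (n + 1)) = z * (c n • z ^ n)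
      rw [← Nat.cast_smul_eq_nsmul ℂ, smul_smul, smul_eq_mul, smul_eq_mul]
      have hne : ((n : ℂ) + 1) ≠ 0 := by
        exact Nat.cast_add_one_ne_zero n
      push_cast
      field_simp
      ring
    have h4 : HasSum (fun n => z * (c n • z ^ n)) (z * v z) := (hsum z).mul_left z
    rw [← funext h3] at h4
    have h5 : fderiv ℂ F z z = z * v z := h2.unique h4
    have h6 : fderiv ℂ F z z = z * deriv F z := by
      have hz1 := (fderiv ℂ F z).map_smul z (1 : ℂ)
      rw [show deriv F z = fderiv ℂ F z 1 from rfl]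
      simpa [smul_eq_mul] using hz1
    have := h6 ▸ h5
    exact (mul_left_cancel₀ hz this)
  have hcont1 : Continuous (deriv F) := by
    have : AnalyticOnNhd ℂ (deriv F) Set.univ :=
      (analyticOnNhd_univ_iff_differentiable.2 hFd).deriv
    rw [← continuousOn_univ]
    exact this.continuousOn
  have : deriv F = v :=
    Continuous.ext_on (dense_compl_singleton (0 : ℂ)) hcont1 hv.continuous
      (fun z hz => hkey z hz)
  exact ⟨F, hFd, this⟩


lemma exists_exp_eq (u : ℂ → ℂ) (hu : Differentiable ℂ u) (h0 : ∀ z, u z ≠ 0) :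
    ∃ t : ℂ → ℂ, Differentiable ℂ t ∧ ∀ z, u z = Complex.exp (t z) := by
  have hu' : Differentiable ℂ (deriv u) := by
    have hA := (analyticOnNhd_univ_iff_differentiable.2 hu).deriv
    exact fun z => (hA z (Set.mem_univ z)).differentiableAt
  set v : ℂ → ℂ := fun z => deriv u z / u z with hv
  have hvd : Differentiable ℂ v := hu'.div hu h0
  obtain ⟨F, hFd, hFder⟩ := exists_primitive v hvd
  have hG : ∀ z, HasDerivAt (fun w => u w * Complex.exp (-F w)) 0 z := by
    intro z
    have h1 : HasDerivAt u (deriv u z) z := (hu z).hasDerivAt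
    have h2 : HasDerivAt (fun w => -F w) (-(v z)) z := by
      have := ((hFd z).hasDerivAt).neg
      rwa [hFder] at this
    have h3 : HasDerivAt (fun w => Complex.exp (-F w))
        (Complex.exp (-F z) * (-(v z))) z := h2.cexp
    have h4 := h1.mul h3
    convert h4 using 1
    · rfl
    · rfl
    · rfl
    simp only [hv]
    field_simp [h0 z]
    ring
  have hGd : Differentiable ℂ (fun w => u w * Complex.exp (-F w)) :=
    fun z => (hG z).differentiableAt
  have hconst : ∀ z, u z * Complex.exp (-F z) = u 0 * Complex.exp (-F 0) :=
    fun z => is_const_of_deriv_eq_zero hGd (fun x => (hG x).deriv) z 0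
  refine ⟨fun z => F z - F 0 + Complex.log (u 0),
    (hFd.sub_const _).add_const _, fun z => ?_⟩
  have hz := hconst z
  rw [Complex.exp_neg, Complex.exp_neg] at hz
  rw [Complex.exp_add, Complex.exp_sub, Complex.exp_log (h0 0)]
  field_simp at hz ⊢
  linear_combination hz

/-- Proposition 3.13: if `f, g, h ∈ elh(ℂ)`, `f ∘ g = f ∘ h` and `g ≢ h`, then
`g - h` never vanishes; equivalently there is an entire `t` with `g = h + e^t`. -/
theorem leftComp_fibre_structure (f g h : ℂ → ℂ) (hf : elh f) (hg : elh g) (hh : elh h)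
    (hcomp : f ∘ g = f ∘ h) (hne : g ≠ h) :
    (∃ t : ℂ → ℂ, Differentiable ℂ t ∧ ∀ z : ℂ, g z = h z + Complex.exp (t z)) ∧
    ∀ z : ℂ, g z - h z ≠ 0 := by
  have key : ∀ z : ℂ, g z - h z ≠ 0 := by
    intro z0 hz0
    have heq : g z0 = h z0 := sub_eq_zero.1 hz0
    set w0 : ℂ := g z0 with hw0
    obtain ⟨p, hp⟩ := (hf.1.analyticAt w0)
    have hsd : HasStrictDerivAt f (deriv f w0) w0 := by
      have := hp.hasStrictDerivAt
      rwa [← this.hasDerivAt.deriv] at this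
    have hf' : deriv f w0 ≠ 0 := hf.2.1 w0
    have hev := (hsd.hasStrictFDerivAt_equiv hf').eventually_left_inverse
    set φ := (hsd.hasStrictFDerivAt_equiv hf').localInverse _ _ _ with hφ
    have hgt : Filter.Tendsto g (𝓝 z0) (𝓝 w0) := hg.1.continuous.continuousAt
    have hht : Filter.Tendsto h (𝓝 z0) (𝓝 w0) := by
      have h2 : Filter.Tendsto h (𝓝 z0) (𝓝 (h z0)) := hh.1.continuous.continuousAt
      rwa [← heq] at h2
    have hev_g : ∀ᶠ z in 𝓝 z0, φ (f (g z)) = g z := hgt.eventually hev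
    have hev_h : ∀ᶠ z in 𝓝 z0, φ (f (h z)) = h z := hht.eventually hev
    have heq_ev : g =ᶠ[𝓝 z0] h := by
      filter_upwards [hev_g, hev_h] with z h1 h2
      have : f (g z) = f (h z) := congrFun hcomp z
      rw [← h1, ← h2, this]
    have : g = h :=
      (analyticOnNhd_univ_iff_differentiable.2 hg.1).eq_of_eventuallyEq
        (analyticOnNhd_univ_iff_differentiable.2 hh.1) heq_ev
    exact hne this
  refine ⟨?_, key⟩
  obtain ⟨t, htd, ht⟩ := exists_exp_eq (fun z => g z - h z) (hg.1.sub hh.1) key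
  exact ⟨t, htd, fun z => by have := ht z; linear_combination this⟩
end

section
/- There exists f ∈ elh(ℂ) such that the left composition mapping L_f is not injective; explicitly, for f(z) = e^{2πiz}/(2πi), g(z) = e^z + 1, and h(z) = e^z, one has f, g, h ∈ elh(ℂ), g ≠ h, and f ∘ g = f ∘ h. (Proposition 3.14.) -/
lemma c_ne : (2 * (Real.pi : ℂ) * Complex.I) ≠ 0 := by
  simp [Real.pi_ne_zero, Complex.I_ne_zero]

lemma deriv_f (z : ℂ) :
    deriv (fun z => Complex.exp (2 * Real.pi * Complex.I * z) / (2 * Real.pi * Complex.I)) z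
      = Complex.exp (2 * Real.pi * Complex.I * z) := by
  have h1 : HasDerivAt (fun z : ℂ => (2 * (Real.pi:ℂ) * Complex.I) * z)
      (2 * (Real.pi:ℂ) * Complex.I) z := by
    simpa using (hasDerivAt_id z).const_mul (2 * (Real.pi:ℂ) * Complex.I)
  have h2 : HasDerivAt (fun z : ℂ => Complex.exp (2 * Real.pi * Complex.I * z))
      (Complex.exp (2 * Real.pi * Complex.I * z) * (2 * Real.pi * Complex.I)) z :=
    (Complex.hasDerivAt_exp _).comp z h1
  have h3 := h2.div_const (2 * (Real.pi:ℂ) * Complex.I)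
  rw [h3.deriv, mul_div_assoc, div_self c_ne, mul_one]

/-- Proposition 3.14: there exists `f ∈ elh(ℂ)` whose left composition mapping `L_f` is not
injective; explicitly `f(z) = e^{2πiz}/(2πi)`, `g(z) = e^z + 1`, `h(z) = e^z`. -/
theorem leftComp_not_injective :
    ∃ f g h : ℂ → ℂ,
      (∀ z : ℂ, f z = Complex.exp (2 * Real.pi * Complex.I * z) / (2 * Real.pi * Complex.I)) ∧
      (∀ z : ℂ, g z = Complex.exp z + 1) ∧
      (∀ z : ℂ, h z = Complex.exp z) ∧
      elh f ∧ elh g ∧ elh h ∧ g ≠ h ∧ f ∘ g = f ∘ h := by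
  refine ⟨_, _, _, fun z => rfl, fun z => rfl, fun z => rfl, ?_, ?_, ?_, ?_, ?_⟩
  · refine ⟨?_, ?_, ?_⟩
    · exact ((Complex.differentiable_exp.comp (differentiable_id.const_mul _)).div_const _)
    · intro z; rw [deriv_f]; exact Complex.exp_ne_zero _
    · rw [deriv_f]; simp
  · refine ⟨Complex.differentiable_exp.add_const 1, ?_, ?_⟩
    · intro z
      simp [deriv_add_const, Complex.deriv_exp, Complex.exp_ne_zero]
    · simp [deriv_add_const, Complex.deriv_exp]
  · exact ⟨Complex.differentiable_exp, fun z => by simp [Complex.exp_ne_zero], by simp⟩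
  · intro hgh
    have := congrFun hgh 0
    simp at this
  · funext z
    simp only [Function.comp_apply]
    congr 1
    rw [mul_add, mul_one, Complex.exp_add, Complex.exp_two_pi_mul_I, mul_one]
end

section
/- The space elh(ℂ), regarded as a subspace of the space of continuous maps ℂ → ℂ equipped with the compact-open topology (equivalently, the topology of uniform convergence on compact subsets of ℂ), is path connected. In particular, for every f ∈ elh(ℂ) there is a continuous path t ↦ f_t (t ∈ [0,1]) with values in elh(ℂ) such that f_0 is the identity map and f_1 = f. (Proposition 3.16, part 1.) -/
open Set

/-- `elh(ℂ)` as a subset of the space `C(ℂ, ℂ)` of continuous maps with the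
compact-open topology (= topology of uniform convergence on compact subsets). -/
def elhSet : Set C(ℂ, ℂ) :=
  {f | Differentiable ℂ ⇑f ∧ (∀ z : ℂ, deriv (⇑f) z ≠ 0) ∧ deriv (⇑f) 0 = 1}

/-- Factorization: an entire `f` with `deriv f 0 = 1` satisfies
`f z = f 0 + z + z ^ 2 * h z` for an entire `h`. -/
lemma elh_factor (f : ℂ → ℂ) (hf : Differentiable ℂ f) (h0 : deriv f 0 = 1) :
    ∃ h : ℂ → ℂ, Differentiable ℂ h ∧ ∀ z, f z = f 0 + z + z ^ 2 * h z := by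
  set g : ℂ → ℂ := fun z => f z - f 0 - z with hg_def
  have hg : Differentiable ℂ g := (hf.sub_const _).sub differentiable_id
  have hg0 : g 0 = 0 := by simp [hg_def]
  have hdg0 : deriv g 0 = 0 := by
    have : deriv g 0 = deriv f 0 - 1 := by
      have h1 : HasDerivAt g (deriv f 0 - 1) 0 := by
        exact ((hf 0).hasDerivAt.sub_const (f 0)).sub (hasDerivAt_id 0)
      exact h1.deriv
    rw [this, h0, sub_self]
  set h₁ : ℂ → ℂ := dslope g 0 with h₁_def
  have hh₁ : Differentiable ℂ h₁ := by
    rw [← differentiableOn_univ] at hg ⊢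
    exact (Complex.differentiableOn_dslope Filter.univ_mem).2 hg
  have hh₁0 : h₁ 0 = 0 := by rw [h₁_def, dslope_same]; exact hdg0
  refine ⟨dslope h₁ 0, ?_, fun z => ?_⟩
  · rw [← differentiableOn_univ] at hh₁ ⊢
    exact (Complex.differentiableOn_dslope Filter.univ_mem).2 hh₁
  · have e1 : z • h₁ z = g z := by
      simpa [hg0] using sub_smul_dslope g 0 z
    have e2 : z • dslope h₁ 0 z = h₁ z := by
      simpa [hh₁0] using sub_smul_dslope h₁ 0 z
    have : g z = z ^ 2 * dslope h₁ 0 z := by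
      rw [← e1, ← e2]; ring_nf
    simp only [hg_def] at this
    linear_combination this

/-- Every element of `elh(ℂ)` is joined to the identity inside `elh(ℂ)`. -/
lemma elh_joinedIn (f : C(ℂ, ℂ)) (hf : f ∈ elhSet) :
    JoinedIn elhSet (ContinuousMap.id ℂ) f := by
  obtain ⟨hfd, hfd0, hfder⟩ := hf
  obtain ⟨h, hh, hfac⟩ := elh_factor f hfd hfder
  -- the functions making up the first path
  set F : ℂ → ℂ → ℂ := fun c z => z + c * z ^ 2 * h (c * z) with hF_def
  have hFmem : ∀ c : ℂ, Differentiable ℂ (F c) ∧ (∀ z, deriv (F c) z ≠ 0) ∧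
      deriv (F c) 0 = 1 := by
    intro c
    rcases eq_or_ne c 0 with rfl | hc
    · have : F 0 = fun z => z := by funext z; simp [hF_def]
      rw [this]
      refine ⟨differentiable_id, ?_, ?_⟩ <;> simp [deriv_id']
    · have hFe : F c = fun z => c⁻¹ * (f (c * z) - f 0) := by
        funext z
        have := hfac (c * z)
        field_simp [hF_def]
        linear_combination -this
      have key : ∀ z₀ : ℂ, HasDerivAt (F c) (deriv f (c * z₀)) z₀ := by
        intro z₀
        rw [hFe]
        have h1 : HasDerivAt (fun z : ℂ => c * z) c z₀ := by
          simpa using (hasDerivAt_id z₀).const_mul c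
        have h2 : HasDerivAt f (deriv f (c * z₀)) (c * z₀) := (hfd _).hasDerivAt
        have h3 := ((h2.comp z₀ h1).sub_const (f 0)).const_mul c⁻¹
        have : c⁻¹ * (deriv f (c * z₀) * c) = deriv f (c * z₀) := by field_simp
        rw [this] at h3
        exact h3
      refine ⟨fun z => (key z).differentiableAt, fun z => ?_, ?_⟩
      · rw [(key z).deriv]; exact hfd0 _
      · rw [(key 0).deriv, mul_zero, hfder]
  -- midpoint of the two paths
  set f₁ : C(ℂ, ℂ) := ⟨fun z => f z - f 0, by fun_prop⟩ with hf₁_def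
  have step1 : JoinedIn elhSet (ContinuousMap.id ℂ) f₁ := by
    have hGc : Continuous fun p : unitInterval × ℂ =>
        p.2 + ((p.1 : ℝ) : ℂ) * p.2 ^ 2 * h (((p.1 : ℝ) : ℂ) * p.2) := by
      have hhc : Continuous h := hh.continuous
      fun_prop
    set G : C(unitInterval × ℂ, ℂ) := ⟨_, hGc⟩ with hG_def
    have hcoe : ∀ t : unitInterval, ⇑(G.curry t) = F ((t : ℝ) : ℂ) := by
      intro t; funext z; simp [hG_def, hF_def]
    refine ⟨⟨⟨G.curry, G.curry.continuous⟩, ?_, ?_⟩, ?_⟩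
    · ext z
      have := congrFun (hcoe 0) z
      simp only [Icc.coe_zero, Complex.ofReal_zero, hF_def] at this
      simpa using this
    · ext z
      have := congrFun (hcoe 1) z
      simp only [Icc.coe_one, Complex.ofReal_one, hF_def] at this
      simp only [ContinuousMap.coe_mk] at this ⊢
      rw [this, hf₁_def]
      have := hfac z
      simp only [ContinuousMap.coe_mk, one_mul]
      linear_combination -this
    · intro t
      show G.curry t ∈ elhSet
      have hm := hFmem ((t : ℝ) : ℂ)
      refine ⟨?_, ?_, ?_⟩ <;> rw [hcoe t]
      exacts [hm.1, hm.2.1, hm.2.2]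
  have step2 : JoinedIn elhSet f₁ f := by
    have hGc : Continuous fun p : unitInterval × ℂ =>
        f p.2 - (1 - ((p.1 : ℝ) : ℂ)) * f 0 := by fun_prop
    set G : C(unitInterval × ℂ, ℂ) := ⟨_, hGc⟩ with hG_def
    refine ⟨⟨⟨G.curry, G.curry.continuous⟩, ?_, ?_⟩, ?_⟩
    · ext z; simp [hG_def, hf₁_def]
    · ext z; simp [hG_def]
    · intro t
      show G.curry t ∈ elhSet
      have hcoe : ⇑(G.curry t) = fun z => f z - (1 - ((t : ℝ) : ℂ)) * f 0 := by
        funext z; simp [hG_def]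
      have key : ∀ z₀ : ℂ, HasDerivAt (fun z => f z - (1 - ((t : ℝ) : ℂ)) * f 0)
          (deriv f z₀) z₀ := fun z₀ => (hfd z₀).hasDerivAt.sub_const _
      refine ⟨?_, ?_, ?_⟩ <;> rw [hcoe]
      · exact fun z => (key z).differentiableAt
      · intro z; rw [(key z).deriv]; exact hfd0 z
      · rw [(key 0).deriv]; exact hfder
  exact step1.trans step2

/-- Proposition 3.16, part 1: `elh(ℂ)` is path connected in the compact-open topology;
in particular every `f ∈ elh(ℂ)` is joined to the identity by a path inside `elh(ℂ)`. -/
theorem elh_isPathConnected :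
    IsPathConnected elhSet ∧
    ∀ f ∈ elhSet, JoinedIn elhSet (ContinuousMap.id ℂ) f := by
  have hid : ContinuousMap.id ℂ ∈ elhSet := by
    refine ⟨differentiable_id, fun z => ?_, ?_⟩ <;>
      simp [ContinuousMap.coe_id, deriv_id']
  exact ⟨⟨ContinuousMap.id ℂ, hid, fun _ hg => elh_joinedIn _ hg⟩,
    fun g hg => elh_joinedIn g hg⟩
end

section
/- Let f ∈ elh(ℂ) be not a translation (i.e., there is no a ∈ ℂ with f(z) = z + a for all z). Then no translation belongs to the image of R_f: there exist no g ∈ elh(ℂ) and a ∈ ℂ such that g(f(z)) = z + a for all z ∈ ℂ. (Claim proved in the discussion preceding Theorem 3.18.) -/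
open Filter Topology Bornology Set

/-- Auxiliary: the "behavior at infinity" function `z ↦ 1 / φ (1/z)` of a proper entire
function, extended by `0` at `0`. -/
noncomputable def invAtInf (φ : ℂ → ℂ) : ℂ → ℂ := fun z => if z = 0 then 0 else (φ z⁻¹)⁻¹

lemma invAtInf_analyticAt (φ : ℂ → ℂ) (hφ : Differentiable ℂ φ)
    (hp : Tendsto φ (cobounded ℂ) (cobounded ℂ)) : AnalyticAt ℂ (invAtInf φ) 0 := by
  have hne : ∀ᶠ z in 𝓝[≠] (0 : ℂ), φ z⁻¹ ≠ 0 := by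
    have h1 : Tendsto (fun z : ℂ => φ z⁻¹) (𝓝[≠] 0) (cobounded ℂ) :=
      hp.comp tendsto_inv₀_nhdsNE_zero
    have h2 : {(0 : ℂ)}ᶜ ∈ cobounded ℂ := by
      rw [Metric.cobounded_eq_cocompact]
      exact isCompact_singleton.compl_mem_cocompact
    exact h1.eventually h2
  have hdiff : ∀ᶠ z in 𝓝[≠] (0 : ℂ), DifferentiableAt ℂ (invAtInf φ) z := by
    filter_upwards [hne, self_mem_nhdsWithin] with z hz hz0
    have hz0' : z ≠ 0 := hz0
    have hev : invAtInf φ =ᶠ[𝓝 z] fun y => (φ y⁻¹)⁻¹ := by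
      filter_upwards [isOpen_compl_singleton.mem_nhds (by simpa using hz0')] with y hy
      simp [invAtInf, (by simpa using hy : y ≠ 0)]
    have : DifferentiableAt ℂ (fun y => (φ y⁻¹)⁻¹) z :=
      (((hφ _).comp z (differentiableAt_inv hz0')).inv hz)
    exact this.congr_of_eventuallyEq hev
  have hcont : ContinuousAt (invAtInf φ) 0 := by
    rw [← continuousWithinAt_compl_self]
    have : Tendsto (invAtInf φ) (𝓝[≠] (0 : ℂ)) (𝓝 0) := by
      have h1 : Tendsto (fun z : ℂ => (φ z⁻¹)⁻¹) (𝓝[≠] 0) (𝓝 0) :=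
        tendsto_inv₀_cobounded.comp (hp.comp tendsto_inv₀_nhdsNE_zero)
      refine h1.congr' ?_
      filter_upwards [self_mem_nhdsWithin] with z hz
      exact (if_neg (hz : z ≠ 0)).symm
    simpa [ContinuousWithinAt, invAtInf] using this
  exact Complex.analyticAt_of_differentiable_on_punctured_nhds_of_continuousAt hdiff hcont



/-- If `f ∈ elh(ℂ)` is not a translation, then no translation belongs to the image of the
right composition mapping `R_f`: there are no `g ∈ elh(ℂ)` and `a ∈ ℂ` with
`g (f z) = z + a` for all `z`. (Discussion preceding Theorem 3.18.) -/
theorem no_translation_in_rightComp_image (f : ℂ → ℂ) (hf : elh f)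
    (hna : ¬ ∃ a : ℂ, ∀ z : ℂ, f z = z + a) :
    ¬ ∃ (g : ℂ → ℂ) (a : ℂ), elh g ∧ ∀ z : ℂ, g (f z) = z + a := by
  rintro ⟨g, a, hg, heq⟩
  obtain ⟨hfd, hfd0, hfd1⟩ := hf
  set G : ℂ → ℂ := fun w => g w - a with hGdef
  have hGd : Differentiable ℂ G := hg.1.sub_const a
  have hGf : ∀ z, G (f z) = z := fun z => by simp [hGdef, heq z]
  have hfinj : Function.Injective f := fun x y h => by
    have := hGf x; rw [h, hGf y] at this; exact this.symm
  -- the range of f is open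
  have hfa : AnalyticOnNhd ℂ f Set.univ := fun z _ => hfd.analyticAt z
  have hopen : IsOpen (Set.range f) := by
    rcases hfa.is_constant_or_isOpen isPreconnected_univ with ⟨w, hw⟩ | h
    · have h01 : (0 : ℂ) = 1 := hfinj ((hw 0 trivial).trans (hw 1 trivial).symm)
      exact absurd h01 (by norm_num)
    · simpa [Set.image_univ] using h Set.univ le_rfl isOpen_univ
  -- f ∘ G = id, so f is surjective with two-sided inverse G
  have hfG : ∀ w, f (G w) = w := by
    have heqn : Set.EqOn (fun w => f (G w)) id Set.univ := by
      apply AnalyticOnNhd.eqOn_of_preconnected_of_eventuallyEq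
        (fun z _ => (hfd.comp hGd).analyticAt z) (fun z _ => analyticAt_id)
        isPreconnected_univ (Set.mem_univ (f 0))
      filter_upwards [hopen.mem_nhds ⟨0, rfl⟩] with w ⟨z, hz⟩
      simp [← hz, hGf z]
    exact fun w => heqn (Set.mem_univ w)
  -- f is a homeomorphism, hence proper
  let e : ℂ ≃ₜ ℂ :=
    { toFun := f, invFun := G, left_inv := hGf, right_inv := hfG,
      continuous_toFun := hfd.continuous, continuous_invFun := hGd.continuous }
  have hfp : Tendsto f (cobounded ℂ) (cobounded ℂ) := by
    rw [Metric.cobounded_eq_cocompact]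
    exact e.map_cocompact.le
  have hGp : Tendsto G (cobounded ℂ) (cobounded ℂ) := by
    rw [Metric.cobounded_eq_cocompact]
    exact e.symm.map_cocompact.le
  -- the functions at infinity
  have hha := invAtInf_analyticAt f hfd hfp
  have hHa := invAtInf_analyticAt G hGd hGp
  set h := invAtInf f
  set H := invAtInf G
  -- H ∘ h = id near 0
  have hne : ∀ᶠ z in 𝓝[≠] (0 : ℂ), f z⁻¹ ≠ 0 := by
    have h1 : Tendsto (fun z : ℂ => f z⁻¹) (𝓝[≠] 0) (cobounded ℂ) :=
      hfp.comp tendsto_inv₀_nhdsNE_zero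
    have h2 : {(0 : ℂ)}ᶜ ∈ cobounded ℂ := by
      rw [Metric.cobounded_eq_cocompact]
      exact isCompact_singleton.compl_mem_cocompact
    exact h1.eventually h2
  have hHh : ∀ᶠ z in 𝓝 (0 : ℂ), H (h z) = z := by
    rw [← nhdsNE_sup_pure]
    rw [eventually_sup]
    constructor
    · filter_upwards [hne, self_mem_nhdsWithin] with z hz hz0
      have hz0' : z ≠ 0 := hz0
      have h1 : h z = (f z⁻¹)⁻¹ := by simp [h, invAtInf, hz0']
      have h2' : (f z⁻¹)⁻¹ ≠ 0 := inv_ne_zero hz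
      rw [h1]
      show H ((f z⁻¹)⁻¹) = z
      simp [H, invAtInf, h2', hGf]
    · simp [h, H, invAtInf]
  -- deriv h 0 ≠ 0 via chain rule
  have hdh : HasDerivAt h (deriv h 0) 0 := hha.differentiableAt.hasDerivAt
  have h00 : h 0 = 0 := by simp [h, invAtInf]
  have hdH : HasDerivAt H (deriv H 0) (h 0) := by
    rw [h00]; exact hHa.differentiableAt.hasDerivAt
  have hchain : HasDerivAt (fun z => H (h z)) (deriv H 0 * deriv h 0) 0 := by
    exact hdH.comp 0 hdh
  have hid : HasDerivAt (fun z => H (h z)) 1 0 :=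
    (hasDerivAt_id (0 : ℂ)).congr_of_eventuallyEq hHh
  have hc : deriv H 0 * deriv h 0 = 1 := by
    rw [hchain.unique hid]
  have hcne : deriv h 0 ≠ 0 := by
    intro h0; rw [h0, mul_zero] at hc; exact zero_ne_one hc
  set c := deriv h 0
  -- slope limit : w / f w → c at infinity
  have hslope : Tendsto (slope h 0) (𝓝[≠] (0 : ℂ)) (𝓝 c) :=
    hasDerivAt_iff_tendsto_slope.mp hdh
  have hwf : Tendsto (fun w : ℂ => w / f w) (cobounded ℂ) (𝓝 c) := by
    have comp := hslope.comp tendsto_inv₀_cobounded'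
    refine comp.congr' ?_
    have h2 : {(0 : ℂ)}ᶜ ∈ cobounded ℂ := by
      rw [Metric.cobounded_eq_cocompact]
      exact isCompact_singleton.compl_mem_cocompact
    filter_upwards [h2] with w hw
    have hw0 : w ≠ 0 := by simpa using hw
    have h1 : h w⁻¹ = (f w)⁻¹ := by
      simp [h, invAtInf, inv_eq_zero, hw0]
    show slope h 0 w⁻¹ = w / f w
    rw [slope_def_field, h1, h00, sub_zero, sub_zero, div_eq_mul_inv, inv_inv, mul_comm,
      ← div_eq_mul_inv]
  have hfw : Tendsto (fun w : ℂ => f w / w) (cobounded ℂ) (𝓝 c⁻¹) := by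
    have := hwf.inv₀ hcne
    refine this.congr ?_
    intro w; simp [inv_div]
  -- dslope f 0 tends to c⁻¹ at infinity and is entire, hence constant
  have hds : Tendsto (dslope f 0) (cocompact ℂ) (𝓝 c⁻¹) := by
    rw [← Metric.cobounded_eq_cocompact]
    have hf0 : Tendsto (fun w : ℂ => f 0 / w) (cobounded ℂ) (𝓝 0) := by
      simpa [div_eq_mul_inv] using tendsto_inv₀_cobounded.const_mul (f 0)
    have : Tendsto (fun w : ℂ => f w / w - f 0 / w) (cobounded ℂ) (𝓝 (c⁻¹ - 0)) :=
      hfw.sub hf0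
    rw [sub_zero] at this
    refine this.congr' ?_
    have h2 : {(0 : ℂ)}ᶜ ∈ cobounded ℂ := by
      rw [Metric.cobounded_eq_cocompact]
      exact isCompact_singleton.compl_mem_cocompact
    filter_upwards [h2] with w hw
    have hw0 : w ≠ 0 := by simpa using hw
    rw [dslope_of_ne _ hw0, slope_def_field, sub_zero, div_sub_div_same]
  have hdsd : Differentiable ℂ (dslope f 0) := by
    rw [← differentiableOn_univ]
    rw [Complex.differentiableOn_dslope univ_mem]
    exact hfd.differentiableOn
  have hconst : ∀ z, dslope f 0 z = c⁻¹ := fun z =>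
    hdsd.apply_eq_of_tendsto_cocompact z hds
  have hc1 : c⁻¹ = 1 := by
    have := hconst 0
    rw [dslope_same, hfd1] at this
    exact this.symm
  refine hna ⟨f 0, fun z => ?_⟩
  rcases eq_or_ne z 0 with rfl | hz
  · ring
  · have h2 := hconst z
    rw [dslope_of_ne _ hz, slope_def_field, hc1, sub_zero, div_eq_one_iff_eq hz,
      sub_eq_iff_eq_add] at h2
    exact h2
end
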